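/- Let $(X, d)$ be a geodesic metric space, suppose $X = \bigcup_{i=1}^{N+1} V_i$ where each geodesic triangle with all three vertices in a single $V_i$ is $\delta$-thin, and suppose additionally: (i) $V_{N+1}$ has finite diameter $M$ in the metric $d$; (ii) for each $i \le N$ there is an open set $U_i \supset V_i$ such that any geodesic from a point of $V_i$ to a point outside $U_i$ meets $U_i \cap V_{N+1}$, and geodesic triangles with vertices in $U_i$ are $\delta$-thin. Then every geodesic triangle in $X$ is $(3\delta + 2M)$-thin, and hence $(X,d)$ is Gromov hyperbolic. -/

import Mathlib

open Metric Set

/-- `γ` is a (unit speed) geodesic from `x` to `y`, parametrized on `[0, dist x y]`. -/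
def IsGeodesic {X : Type*} [MetricSpace X] (x y : X) (γ : ℝ → X) : Prop :=
  γ 0 = x ∧ γ (dist x y) = y ∧
    ∀ s ∈ Set.Icc (0 : ℝ) (dist x y), ∀ t ∈ Set.Icc (0 : ℝ) (dist x y),
      dist (γ s) (γ t) = |s - t|

/-- The image of a geodesic segment from `x` to `y`. -/
def geodImg {X : Type*} [MetricSpace X] (x y : X) (γ : ℝ → X) : Set X :=
  γ '' Set.Icc 0 (dist x y)

/-- Every geodesic triangle with vertices in `A` is `δ`-thin: each side lies in the
`δ`-neighbourhood of the union of the other two sides. -/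
def TrianglesThinOn {X : Type*} [MetricSpace X] (A : Set X) (δ : ℝ) : Prop :=
  ∀ x ∈ A, ∀ y ∈ A, ∀ z ∈ A, ∀ γ₁ γ₂ γ₃ : ℝ → X,
    IsGeodesic x y γ₁ → IsGeodesic y z γ₂ → IsGeodesic x z γ₃ →
    (∀ p ∈ geodImg x y γ₁, infDist p (geodImg y z γ₂ ∪ geodImg x z γ₃) ≤ δ) ∧
    (∀ p ∈ geodImg y z γ₂, infDist p (geodImg x y γ₁ ∪ geodImg x z γ₃) ≤ δ) ∧
    (∀ p ∈ geodImg x z γ₃, infDist p (geodImg x y γ₁ ∪ geodImg y z γ₂) ≤ δ)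

/-- The Gromov product `(x|y)_o`. -/
noncomputable def gromovProd {X : Type*} [MetricSpace X] (o x y : X) : ℝ :=
  (dist x o + dist y o - dist x y) / 2

/-!
Write `K` for the bounded core `V_{N+1}`. A geodesic starting in a piece `V i` can leave the
thin neighbourhood `U i` only through `K`, so thinness in `U i` controls it up to its first core
point, and beyond that point it is `M`-close to its endpoint whenever the endpoint lies in `K`.
Unless a triangle `abc` lies in one `U m`, the sides at `c` reach `K`, and then every geodesic
from `K` to `c` is `(δ + 2M)`-close to them. Running the argument from both ends of `[a, b]`
shows that the side is `(3δ + 2M)`-close to the other two up to two core points on it; the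
stretch between them is `2M`-close to a core point of the other sides. Thin triangles give the
four-point condition for the Gromov product in the usual way.
-/

section Geodesics

variable {X : Type*} [MetricSpace X]

theorem Metric.mem_cthickening_iff_infDist_le {E : Set X} {x : X} {δ : ℝ} (hδ : 0 ≤ δ)
    (hE : E.Nonempty) : x ∈ cthickening δ E ↔ infDist x E ≤ δ :=
  mem_cthickening_iff.trans (ENNReal.le_ofReal_iff_toReal_le (infEDist_ne_top hE) hδ)

namespace IsGeodesic

variable {x y p q w : X} {γ : ℝ → X}

theorem dist_left (h : IsGeodesic x y γ) {t : ℝ} (ht : t ∈ Icc 0 (dist x y)) :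
    dist x (γ t) = t := by
  rw [← h.1, h.2.2 0 ⟨le_rfl, dist_nonneg⟩ t ht, zero_sub, abs_neg, abs_of_nonneg ht.1]

theorem left_mem (h : IsGeodesic x y γ) : x ∈ geodImg x y γ :=
  ⟨0, ⟨le_rfl, dist_nonneg⟩, h.1⟩

theorem right_mem (h : IsGeodesic x y γ) : y ∈ geodImg x y γ :=
  ⟨dist x y, ⟨dist_nonneg, le_rfl⟩, h.2.1⟩

theorem dist_eq_abs_sub (h : IsGeodesic x y γ) (hp : p ∈ geodImg x y γ)
    (hq : q ∈ geodImg x y γ) : dist p q = |dist x p - dist x q| := by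
  obtain ⟨s, hs, rfl⟩ := hp
  obtain ⟨t, ht, rfl⟩ := hq
  rw [h.dist_left hs, h.dist_left ht]
  exact h.2.2 s hs t ht

theorem dist_add_dist (h : IsGeodesic x y γ) (hp : p ∈ geodImg x y γ) :
    dist x p + dist p y = dist x y := by
  have hxp : dist x p ≤ dist x y := by
    obtain ⟨t, ht, rfl⟩ := hp
    exact (h.dist_left ht).trans_le ht.2
  rw [h.dist_eq_abs_sub hp h.right_mem, abs_sub_comm, abs_of_nonneg (sub_nonneg.2 hxp)]
  ring

theorem geodImg_subset_closedBall (h : IsGeodesic x y γ) :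
    geodImg x y γ ⊆ closedBall y (dist x y) := fun p hp => by
  rw [mem_closedBall]
  linarith [h.dist_add_dist hp, dist_nonneg (x := x) (y := p)]

theorem of_mem (h : IsGeodesic x y γ) (hw : w ∈ geodImg x y γ) : IsGeodesic x w γ := by
  obtain ⟨s, hs, rfl⟩ := hw
  have hd := h.dist_left hs
  refine ⟨h.1, by rw [hd], fun a ha b hb => ?_⟩
  rw [hd] at ha hb
  exact h.2.2 a ⟨ha.1, ha.2.trans hs.2⟩ b ⟨hb.1, hb.2.trans hs.2⟩

theorem geodImg_subset_of_mem (h : IsGeodesic x y γ) (hw : w ∈ geodImg x y γ) :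
    geodImg x w γ ⊆ geodImg x y γ := by
  obtain ⟨s, hs, rfl⟩ := hw
  exact image_mono (by rw [h.dist_left hs]; exact Icc_subset_Icc le_rfl hs.2)

theorem mem_geodImg_or_dist_le (h : IsGeodesic x y γ) (hw : w ∈ geodImg x y γ)
    (hp : p ∈ geodImg x y γ) : p ∈ geodImg x w γ ∨ dist p y ≤ dist w y := by
  by_cases hpw : dist x p ≤ dist x w
  · left
    obtain ⟨t, ht, rfl⟩ := hp
    rw [h.dist_left ht] at hpw
    exact ⟨t, ⟨ht.1, hpw⟩, rfl⟩
  · right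
    linarith [h.dist_add_dist hp, h.dist_add_dist hw]

theorem dist_le_dist_of_between (h : IsGeodesic x y γ) (hp : p ∈ geodImg x y γ)
    (hw : w ∈ geodImg x y γ) (hq : q ∈ geodImg x y γ) (hpy : dist p y ≤ dist w y)
    (hpx : dist p x ≤ dist q x) : dist p w ≤ dist w q := by
  have hwp : dist x w ≤ dist x p := by linarith [h.dist_add_dist hp, h.dist_add_dist hw]
  have hpq : dist x p ≤ dist x q := by rwa [dist_comm x p, dist_comm x q]
  rw [h.dist_eq_abs_sub hp hw, h.dist_eq_abs_sub hw hq, abs_of_nonneg (by linarith),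
    abs_of_nonpos (by linarith)]
  linarith

theorem exists_symm (h : IsGeodesic x y γ) :
    ∃ γ' : ℝ → X, IsGeodesic y x γ' ∧ geodImg y x γ' = geodImg x y γ := by
  have hreflect : ∀ t ∈ Icc (0 : ℝ) (dist x y), dist x y - t ∈ Icc (0 : ℝ) (dist x y) :=
    fun t ht => ⟨by linarith [ht.2], by linarith [ht.1]⟩
  refine ⟨fun t => γ (dist x y - t), ⟨by simpa using h.2.1, ?_, ?_⟩, ?_⟩
  · simp only [dist_comm y x, sub_self, h.1]
  · intro s hs t ht
    rw [dist_comm y x] at hs ht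
    rw [h.2.2 _ (hreflect s hs) _ (hreflect t ht), ← abs_neg]
    ring_nf
  · rw [geodImg, geodImg, dist_comm y x]
    ext p
    constructor
    · rintro ⟨t, ht, rfl⟩
      exact ⟨_, hreflect t ht, rfl⟩
    · rintro ⟨t, ht, rfl⟩
      exact ⟨_, hreflect t ht, by simp⟩

theorem continuousOn (h : IsGeodesic x y γ) : ContinuousOn γ (Icc 0 (dist x y)) :=
  (LipschitzOnWith.of_dist_le' (K := 1) fun s hs t ht => by
    rw [h.2.2 s hs t ht, Real.dist_eq, one_mul]).continuousOn

theorem isCompact_geodImg (h : IsGeodesic x y γ) : IsCompact (geodImg x y γ) :=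
  isCompact_Icc.image_of_continuousOn h.continuousOn

theorem isPreconnected_geodImg (h : IsGeodesic x y γ) : IsPreconnected (geodImg x y γ) :=
  isPreconnected_Icc.image γ h.continuousOn

theorem dist_add_dist_le_of_mem_cthickening (h : IsGeodesic x y γ) {r : ℝ} (hr : 0 ≤ r)
    (hp : p ∈ cthickening r (geodImg x y γ)) : dist x p + dist p y ≤ dist x y + 2 * r := by
  rw [h.isCompact_geodImg.cthickening_eq_biUnion_closedBall hr] at hp
  obtain ⟨q, hq, hpq⟩ := mem_iUnion₂.1 hp
  rw [mem_closedBall] at hpq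
  linarith [h.dist_add_dist hq, dist_triangle x q p, dist_triangle p q y, dist_comm p q]

end IsGeodesic

end Geodesics

section Thin

variable {X : Type*} [MetricSpace X] {A : Set X} {δ : ℝ}

theorem TrianglesThinOn.geodImg_subset_cthickening (hA : TrianglesThinOn A δ) (hδ : 0 ≤ δ)
    {x y z : X} (hx : x ∈ A) (hy : y ∈ A) (hz : z ∈ A) {γ₁ γ₂ γ₃ : ℝ → X}
    (h₁ : IsGeodesic x y γ₁) (h₂ : IsGeodesic y z γ₂) (h₃ : IsGeodesic x z γ₃) :
    geodImg x y γ₁ ⊆ cthickening δ (geodImg y z γ₂ ∪ geodImg x z γ₃) := fun p hp =>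
  (mem_cthickening_iff_infDist_le hδ ⟨y, Or.inl h₂.left_mem⟩).2
    ((hA x hx y hy z hz γ₁ γ₂ γ₃ h₁ h₂ h₃).1 p hp)

theorem TrianglesThinOn.of_geodImg_subset_cthickening (hδ : 0 ≤ δ)
    (hside : ∀ x ∈ A, ∀ y ∈ A, ∀ z ∈ A, ∀ γ₁ γ₂ γ₃ : ℝ → X,
      IsGeodesic x y γ₁ → IsGeodesic y z γ₂ → IsGeodesic x z γ₃ →
      geodImg x y γ₁ ⊆ cthickening δ (geodImg y z γ₂ ∪ geodImg x z γ₃)) :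
    TrianglesThinOn A δ := by
  have hinfDist : ∀ {p : X} {S S' : Set X}, S.Nonempty → p ∈ cthickening δ (S ∪ S') →
      infDist p (S ∪ S') ≤ δ := fun hS hp =>
    (mem_cthickening_iff_infDist_le hδ (hS.mono subset_union_left)).1 hp
  intro x hx y hy z hz γ₁ γ₂ γ₃ h₁ h₂ h₃
  obtain ⟨γ₁', h₁', e₁⟩ := h₁.exists_symm
  obtain ⟨γ₂', h₂', e₂⟩ := h₂.exists_symm
  obtain ⟨γ₃', h₃', e₃⟩ := h₃.exists_symm
  refine ⟨fun p hp => hinfDist ⟨y, h₂.left_mem⟩ (hside x hx y hy z hz _ _ _ h₁ h₂ h₃ hp),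
    fun p hp => ?_, fun p hp => ?_⟩
  · have := hside y hy z hz x hx _ _ _ h₂ h₃' h₁' hp
    rw [e₃, e₁, union_comm] at this
    exact hinfDist ⟨x, h₁.left_mem⟩ this
  · have := hside x hx z hz y hy _ _ _ h₃ h₂' h₁ hp
    rw [e₂, union_comm] at this
    exact hinfDist ⟨x, h₁.left_mem⟩ this

end Thin

section Gromov

variable {X : Type*} [MetricSpace X] {Δ : ℝ}

theorem gromovProd_comm (o x y : X) : gromovProd o x y = gromovProd o y x := by
  rw [gromovProd, gromovProd, dist_comm x y, add_comm (dist x o)]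

theorem IsGeodesic.gromovProd_le_dist_add {x y p : X} {γ : ℝ → X} (h : IsGeodesic x y γ)
    {r : ℝ} (hr : 0 ≤ r) (hp : p ∈ cthickening r (geodImg x y γ)) (o : X) :
    gromovProd o x y ≤ dist o p + r := by
  rw [gromovProd]
  linarith [h.dist_add_dist_le_of_mem_cthickening hr hp, dist_triangle x p o,
    dist_triangle y p o, dist_comm y p, dist_comm o p]

theorem TrianglesThinOn.exists_mem_geodImg_dist_le_gromovProd
    (hthin : TrianglesThinOn (univ : Set X) Δ) (hΔ : 0 ≤ Δ)
    (hGeo : ∀ a b : X, ∃ γ : ℝ → X, IsGeodesic a b γ) (o : X) {x y : X} {γ : ℝ → X}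
    (hγ : IsGeodesic x y γ) : ∃ p ∈ geodImg x y γ, dist o p ≤ gromovProd o x y + 2 * Δ := by
  obtain ⟨α, hα⟩ := hGeo x o
  obtain ⟨β, hβ⟩ := hGeo y o
  -- `[x, y]` is connected and covered by the closed `Δ`-neighbourhoods of `[x, o]` and `[y, o]`,
  -- which contain its endpoints, so some point of it is `Δ`-close to both.
  have hcover := hthin.geodImg_subset_cthickening hΔ (mem_univ x) (mem_univ y) (mem_univ o) hγ hβ hα
  rw [cthickening_union, union_comm] at hcover
  obtain ⟨p, hp, hpα, hpβ⟩ := isPreconnected_closed_iff.1 hγ.isPreconnected_geodImg _ _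
    isClosed_cthickening isClosed_cthickening hcover
    ⟨x, hγ.left_mem, self_subset_cthickening _ hα.left_mem⟩
    ⟨y, hγ.right_mem, self_subset_cthickening _ hβ.left_mem⟩
  refine ⟨p, hp, ?_⟩
  rw [gromovProd]
  linarith [hα.dist_add_dist_le_of_mem_cthickening hΔ hpα,
    hβ.dist_add_dist_le_of_mem_cthickening hΔ hpβ, hγ.dist_add_dist hp, dist_comm o p,
    dist_comm y p]

theorem TrianglesThinOn.gromovProd_ge_min_sub (hthin : TrianglesThinOn (univ : Set X) Δ)
    (hΔ : 0 ≤ Δ) (hGeo : ∀ a b : X, ∃ γ : ℝ → X, IsGeodesic a b γ) (o x y z : X) :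
    gromovProd o x y ≥ min (gromovProd o x z) (gromovProd o z y) - 3 * Δ := by
  obtain ⟨γ₁, h₁⟩ := hGeo x y
  obtain ⟨γ₂, h₂⟩ := hGeo y z
  obtain ⟨γ₃, h₃⟩ := hGeo x z
  obtain ⟨p, hp, hop⟩ := hthin.exists_mem_geodImg_dist_le_gromovProd hΔ hGeo o h₁
  have hpT := hthin.geodImg_subset_cthickening hΔ (mem_univ x) (mem_univ y) (mem_univ z)
    h₁ h₂ h₃ hp
  rw [cthickening_union] at hpT
  rcases hpT with hp₂ | hp₃
  · have := h₂.gromovProd_le_dist_add hΔ hp₂ o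
    rw [← gromovProd_comm] at this
    linarith [min_le_right (gromovProd o x z) (gromovProd o z y)]
  · have := h₃.gromovProd_le_dist_add hΔ hp₃ o
    linarith [min_le_left (gromovProd o x z) (gromovProd o z y)]

end Gromov

section Gluing

variable {X : Type*} [MetricSpace X] {ι : Type*}

def CoreGeodesicsNear (K T : Set X) (r : ℝ) (c : X) : Prop :=
  ∀ w ∈ K, ∀ η : ℝ → X, IsGeodesic w c η → geodImg w c η ⊆ cthickening r T

theorem CoreGeodesicsNear.mono {K T : Set X} {r r' : ℝ} {c : X}
    (hc : CoreGeodesicsNear K T r c) (hr : r ≤ r') : CoreGeodesicsNear K T r' c :=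
  fun w hw η hη => (hc w hw η hη).trans (cthickening_mono hr T)

structure ThinCoreCover (K : Set X) (V U : ι → Set X) (δ M : ℝ) : Prop where
  δ_nonneg : 0 ≤ δ
  M_nonneg : 0 ≤ M
  exists_geodesic : ∀ a b : X, ∃ γ : ℝ → X, IsGeodesic a b γ
  mem_core_or_mem : ∀ x, x ∈ K ∨ ∃ i, x ∈ V i
  dist_le : ∀ x ∈ K, ∀ y ∈ K, dist x y ≤ M
  subset : ∀ i, V i ⊆ U i
  thin : ∀ i, TrianglesThinOn (U i) δ
  exits_through_core : ∀ i, ∀ x ∈ V i, ∀ y ∉ U i, ∀ γ : ℝ → X,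
    IsGeodesic x y γ → (geodImg x y γ ∩ (U i ∩ K)).Nonempty

namespace ThinCoreCover

variable {K T : Set X} {V U : ι → Set X} {δ M : ℝ} (h : ThinCoreCover K V U δ M)
include h

theorem coreGeodesicsNear_of_mem {c : X} (hcK : c ∈ K) (hcT : c ∈ T) :
    CoreGeodesicsNear K T M c := fun w hw _ hη =>
  hη.geodImg_subset_closedBall.trans <| (closedBall_subset_closedBall (h.dist_le w hw c hcK)).trans
    (closedBall_subset_cthickening hcT M)

theorem geodImg_subset_of_mem_nbhd {i : ι} {a b c : X} {α β σ : ℝ → X} {r : ℝ} (hr : 0 ≤ r)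
    (ha : a ∈ U i) (hb : b ∈ U i) (hc : c ∈ U i)
    (hα : IsGeodesic a b α) (hβ : IsGeodesic b c β) (hσ : IsGeodesic a c σ)
    (hβT : geodImg b c β ⊆ cthickening r T) (hσT : geodImg a c σ ⊆ cthickening r T) :
    geodImg a b α ⊆ cthickening (δ + r) T :=
  ((h.thin i).geodImg_subset_cthickening h.δ_nonneg ha hb hc hα hβ hσ).trans <|
    (cthickening_subset_of_subset δ (union_subset hβT hσT)).trans
      (cthickening_cthickening_subset h.δ_nonneg hr T)

theorem geodImg_subset_of_coreGeodesicsNear {k : ι} {b c w : X} {π ρ : ℝ → X} {r : ℝ}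
    (hr : 0 ≤ r) (hb : b ∈ V k) (hc : c ∈ U k) (hπ : IsGeodesic b c π)
    (hπT : geodImg b c π ⊆ T) (hcT : CoreGeodesicsNear K T r c)
    (hw : w ∈ K) (hwT : closedBall w M ⊆ cthickening r T) (hρ : IsGeodesic b w ρ) :
    geodImg b w ρ ⊆ cthickening (δ + r) T := by
  have hcore : ∀ w' ∈ U k ∩ K, ∀ ρ' : ℝ → X, IsGeodesic b w' ρ' →
      geodImg b w' ρ' ⊆ cthickening (δ + r) T := by
    rintro w' ⟨hw'U, hw'K⟩ ρ' hρ'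
    obtain ⟨η, hη⟩ := h.exists_geodesic w' c
    exact h.geodImg_subset_of_mem_nbhd hr (h.subset k hb) hw'U hc hρ' hη hπ (hcT w' hw'K η hη)
      (hπT.trans (self_subset_cthickening T))
  by_cases hwU : w ∈ U k
  · exact hcore w ⟨hwU, hw⟩ ρ hρ
  obtain ⟨w', hw'ρ, hw'⟩ := h.exits_through_core k b hb w hwU ρ hρ
  intro p hp
  rcases hρ.mem_geodImg_or_dist_le hw'ρ hp with hp' | hpw
  · exact hcore w' hw' ρ (hρ.of_mem hw'ρ) hp'
  · refine cthickening_mono (le_add_of_nonneg_left h.δ_nonneg) T (hwT ?_)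
    rw [mem_closedBall]
    exact hpw.trans (h.dist_le w' hw'.2 w hw)

theorem coreGeodesicsNear_of_geodesic_to_core {m : ι} {z w' : X} {π : ℝ → X}
    (hz : z ∈ V m) (hw' : w' ∈ U m ∩ K) (hπ : IsGeodesic z w' π) (hπT : geodImg z w' π ⊆ T) :
    CoreGeodesicsNear K T (δ + 2 * M) z := by
  intro w hw η hη
  obtain ⟨η', hη', hη'img⟩ := hη.exists_symm
  rw [← hη'img]
  have hw'T := hπT hπ.right_mem
  have hM := h.M_nonneg
  refine h.geodImg_subset_of_coreGeodesicsNear (by linarith) hz hw'.1 hπ hπT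
    ((h.coreGeodesicsNear_of_mem hw'.2 hw'T).mono (by linarith)) hw ?_ hη'
  exact (closedBall_subset_closedBall' (by linarith [h.dist_le w hw w' hw'.2])).trans
    (closedBall_subset_cthickening hw'T _)

theorem coreGeodesicsNear_and_nonempty_of_notMem {m : ι} {z u : X} {π : ℝ → X}
    (hz : z ∈ V m) (hu : u ∉ U m) (hπ : IsGeodesic z u π) (hπT : geodImg z u π ⊆ T) :
    CoreGeodesicsNear K T (δ + 2 * M) z ∧ (T ∩ K).Nonempty := by
  obtain ⟨w, hwπ, hw⟩ := h.exits_through_core m z hz u hu π hπ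
  exact ⟨h.coreGeodesicsNear_of_geodesic_to_core hz hw (hπ.of_mem hwπ)
    ((hπ.geodImg_subset_of_mem hwπ).trans hπT), w, hπT hwπ, hw.2⟩

theorem exists_mem_nbhd_or_coreGeodesicsNear {z u v : X} {π τ : ℝ → X}
    (hπ : IsGeodesic z u π) (hτ : IsGeodesic z v τ)
    (hπT : geodImg z u π ⊆ T) (hτT : geodImg z v τ ⊆ T) :
    (∃ m, z ∈ U m ∧ u ∈ U m ∧ v ∈ U m) ∨
      (CoreGeodesicsNear K T (δ + 2 * M) z ∧ (T ∩ K).Nonempty) := by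
  rcases h.mem_core_or_mem z with hzK | ⟨m, hz⟩
  · have hzT := hπT hπ.left_mem
    exact Or.inr ⟨(h.coreGeodesicsNear_of_mem hzK hzT).mono
      (by linarith [h.δ_nonneg, h.M_nonneg]), z, hzT, hzK⟩
  by_cases hu : u ∈ U m
  · by_cases hv : v ∈ U m
    · exact Or.inl ⟨m, h.subset m hz, hu, hv⟩
    · exact Or.inr (h.coreGeodesicsNear_and_nonempty_of_notMem hz hv hτ hτT)
  · exact Or.inr (h.coreGeodesicsNear_and_nonempty_of_notMem hz hu hπ hπT)

theorem exists_mem_nbhd_coreGeodesicsNear {i : ι} {v z : X} {τ : ℝ → X} (hv : v ∈ V i)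
    (hτ : IsGeodesic v z τ) (hτT : geodImg v z τ ⊆ T) (hz : CoreGeodesicsNear K T (δ + 2 * M) z) :
    ∃ c ∈ U i, ∃ σ : ℝ → X, IsGeodesic v c σ ∧ geodImg v c σ ⊆ T ∧
      CoreGeodesicsNear K T (δ + 2 * M) c := by
  by_cases hzU : z ∈ U i
  · exact ⟨z, hzU, τ, hτ, hτT, hz⟩
  obtain ⟨w, hwτ, hw⟩ := h.exits_through_core i v hv z hzU τ hτ
  exact ⟨w, hw.1, τ, hτ.of_mem hwτ, (hτ.geodImg_subset_of_mem hwτ).trans hτT,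
    (h.coreGeodesicsNear_of_mem hw.2 (hτT hwτ)).mono (by linarith [h.δ_nonneg, h.M_nonneg])⟩

theorem geodImg_subset_of_mem_core {u z w : X} {π ρ : ℝ → X} (hπ : IsGeodesic u z π)
    (hπT : geodImg u z π ⊆ T) (hz : CoreGeodesicsNear K T (δ + 2 * M) z)
    (hwK : w ∈ K) (hwT : w ∈ T) (hρ : IsGeodesic u w ρ) :
    geodImg u w ρ ⊆ cthickening (2 * δ + 2 * M) T := by
  have hδ := h.δ_nonneg
  have hM := h.M_nonneg
  rcases h.mem_core_or_mem u with huK | ⟨k, hu⟩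
  · exact (h.coreGeodesicsNear_of_mem hwK hwT).mono (by linarith) u huK ρ hρ
  obtain ⟨c, hc, σ, hσ, hσT, hcT⟩ := h.exists_mem_nbhd_coreGeodesicsNear hu hπ hπT hz
  refine (h.geodImg_subset_of_coreGeodesicsNear (by linarith) hu hc hσ hσT hcT hwK
    ((closedBall_subset_cthickening hwT M).trans (cthickening_mono (by linarith) T)) hρ).trans
    (cthickening_mono (by linarith) T)

theorem geodImg_subset_or_exists_core {v u z : X} {γ τ π : ℝ → X} (hγ : IsGeodesic v u γ)
    (hτ : IsGeodesic v z τ) (hπ : IsGeodesic u z π) (hτT : geodImg v z τ ⊆ T)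
    (hπT : geodImg u z π ⊆ T) (hz : CoreGeodesicsNear K T (δ + 2 * M) z) :
    geodImg v u γ ⊆ cthickening (3 * δ + 2 * M) T ∨
      ∃ w ∈ geodImg v u γ, w ∈ K ∧ geodImg v w γ ⊆ cthickening (3 * δ + 2 * M) T := by
  have hδ := h.δ_nonneg
  have hM := h.M_nonneg
  rcases h.mem_core_or_mem v with hvK | ⟨i, hv⟩
  · refine Or.inr ⟨v, hγ.left_mem, hvK, (hγ.of_mem hγ.left_mem).geodImg_subset_closedBall.trans ?_⟩
    rw [dist_self]
    exact (closedBall_subset_cthickening (hτT hτ.left_mem) 0).trans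
      (cthickening_mono (by linarith) T)
  by_cases huU : u ∈ U i
  · refine Or.inl ?_
    by_cases hzU : z ∈ U i
    · exact (h.geodImg_subset_of_mem_nbhd le_rfl (h.subset i hv) huU hzU hγ hπ hτ
        (hπT.trans (self_subset_cthickening T)) (hτT.trans (self_subset_cthickening T))).trans
        (cthickening_mono (by linarith) T)
    -- Replace `z` by the core point where `τ` leaves `U i`.
    obtain ⟨w, hwτ, hw⟩ := h.exits_through_core i v hv z hzU τ hτ
    obtain ⟨ρ, hρ⟩ := h.exists_geodesic u w
    exact (h.geodImg_subset_of_mem_nbhd (by linarith) (h.subset i hv) huU hw.1 hγ hρ (hτ.of_mem hwτ)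
      (h.geodImg_subset_of_mem_core hπ hπT hz hw.2 (hτT hwτ) hρ)
      ((hτ.geodImg_subset_of_mem hwτ).trans (hτT.trans (self_subset_cthickening T)))).trans
      (cthickening_mono (by linarith) T)
  · obtain ⟨w, hwγ, hw⟩ := h.exits_through_core i v hv u huU γ hγ
    obtain ⟨c, hc, σ, hσ, hσT, hcT⟩ := h.exists_mem_nbhd_coreGeodesicsNear hv hτ hτT hz
    obtain ⟨η, hη⟩ := h.exists_geodesic w c
    exact Or.inr ⟨w, hwγ, hw.2, (h.geodImg_subset_of_mem_nbhd (by linarith) (h.subset i hv) hw.1 hc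
      (hγ.of_mem hwγ) hη hσ (hcT w hw.2 η hη) (hσT.trans (self_subset_cthickening T))).trans
      (cthickening_mono (by linarith) T)⟩

theorem geodImg_subset_cthickening {a b c : X} {α β σ : ℝ → X} (hα : IsGeodesic a b α)
    (hβ : IsGeodesic b c β) (hσ : IsGeodesic a c σ) :
    geodImg a b α ⊆ cthickening (3 * δ + 2 * M) (geodImg b c β ∪ geodImg a c σ) := by
  have hδ := h.δ_nonneg
  obtain ⟨α', hα', hα'img⟩ := hα.exists_symm
  obtain ⟨β', hβ', hβ'img⟩ := hβ.exists_symm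
  obtain ⟨σ', hσ', hσ'img⟩ := hσ.exists_symm
  rcases h.exists_mem_nbhd_or_coreGeodesicsNear hβ' hσ' (hβ'img.trans_subset subset_union_left)
      (hσ'img.trans_subset subset_union_right) with ⟨m, hc, hb, ha⟩ | ⟨hcT, w, hwT, hwK⟩
  · exact ((h.thin m).geodImg_subset_cthickening hδ ha hb hc hα hβ hσ).trans
      (cthickening_mono (by linarith [h.M_nonneg]) _)
  rcases h.geodImg_subset_or_exists_core hα hσ hβ subset_union_right subset_union_left hcT with
    hall | ⟨w₁, hw₁α, hw₁K, hw₁T⟩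
  · exact hall
  rcases h.geodImg_subset_or_exists_core hα' hβ hσ subset_union_left subset_union_right hcT with
    hall | ⟨w₂, hw₂α', hw₂K, hw₂T⟩
  · rwa [hα'img] at hall
  -- Otherwise `p` lies between the core points `w₁` and `w₂` on `α`.
  intro p hp
  rcases hα.mem_geodImg_or_dist_le hw₁α hp with hp₁ | hpb
  · exact hw₁T hp₁
  rcases hα'.mem_geodImg_or_dist_le hw₂α' (hα'img ▸ hp) with hp₂ | hpa
  · exact hw₂T hp₂
  have hpw₁ := hα.dist_le_dist_of_between hp hw₁α (hα'img ▸ hw₂α') hpb hpa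
  refine cthickening_mono (by linarith) _ (closedBall_subset_cthickening hwT (2 * M) ?_)
  rw [mem_closedBall]
  linarith [dist_triangle p w₁ w, h.dist_le w₁ hw₁K w₂ hw₂K, h.dist_le w₁ hw₁K w hwK]

theorem trianglesThinOn_univ : TrianglesThinOn (univ : Set X) (3 * δ + 2 * M) :=
  TrianglesThinOn.of_geodImg_subset_cthickening (by linarith [h.δ_nonneg, h.M_nonneg])
    fun _ _ _ _ _ _ _ _ _ h₁ h₂ h₃ => h.geodImg_subset_cthickening h₁ h₂ h₃

end ThinCoreCover

end Gluing

theorem stmt_18_general {X : Type*} [MetricSpace X] (δ Mdiam : ℝ) (hδ : 0 ≤ δ)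
    (hM : 0 ≤ Mdiam)
    (hGeo : ∀ a b : X, ∃ γ : ℝ → X, IsGeodesic a b γ)
    (N : ℕ) (V : Fin (N + 1) → Set X) (U : Fin N → Set X)
    (hcover : (⋃ i, V i) = univ)
    (hdiam : EMetric.diam (V (Fin.last N)) ≤ ENNReal.ofReal Mdiam)
    (hUV : ∀ i : Fin N, V i.castSucc ⊆ U i)
    (hUthin : ∀ i : Fin N, TrianglesThinOn (U i) δ)
    (hmeet : ∀ i : Fin N, ∀ x ∈ V i.castSucc, ∀ y ∉ U i, ∀ γ : ℝ → X,
      IsGeodesic x y γ → (geodImg x y γ ∩ (U i ∩ V (Fin.last N))).Nonempty) :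
    TrianglesThinOn (univ : Set X) (3 * δ + 2 * Mdiam) ∧
      ∃ δ' ≥ (0 : ℝ), ∀ o x y z : X,
        gromovProd o x y ≥ min (gromovProd o x z) (gromovProd o z y) - δ' := by
  have hX : ThinCoreCover (V (Fin.last N)) (fun i : Fin N => V i.castSucc) U δ Mdiam :=
    { δ_nonneg := hδ
      M_nonneg := hM
      exists_geodesic := hGeo
      mem_core_or_mem := fun x => by
        obtain ⟨j, hj⟩ := mem_iUnion.1 (hcover ▸ mem_univ x)
        induction j using Fin.lastCases with
        | last => exact Or.inl hj
        | cast i => exact Or.inr ⟨i, hj⟩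
      dist_le := fun x hx y hy =>
        (edist_le_ofReal hM).1 ((edist_le_ediam_of_mem hx hy).trans hdiam)
      subset := hUV
      thin := hUthin
      exits_through_core := hmeet }
  have hthin := hX.trianglesThinOn_univ
  exact ⟨hthin, 3 * (3 * δ + 2 * Mdiam), by linarith,
    hthin.gromovProd_ge_min_sub (by linarith) hGeo⟩

/-- local-to-global gluing of thinness.  `X` is covered by `V 0, …, V N`
(`V (Fin.last N)` playing the role of `V_{N+1}`), each locally hyperbolic; the last
piece has diameter at most `M`; for `i < N` there is an open `U i ⊇ V i` such that
geodesics leaving `U i` from `V i` meet `U i ∩ V (Fin.last N)` and triangles with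
vertices in `U i` are `δ`-thin.  Then all geodesic triangles in `X` are
`(3δ + 2M)`-thin, and `X` is Gromov hyperbolic. -/
theorem stmt_18 {X : Type*} [MetricSpace X] (δ Mdiam : ℝ) (hδ : 0 ≤ δ)
    (hM : 0 ≤ Mdiam)
    (hGeo : ∀ a b : X, ∃ γ : ℝ → X, IsGeodesic a b γ)
    (N : ℕ) (V : Fin (N + 1) → Set X) (U : Fin N → Set X)
    (hcover : (⋃ i, V i) = univ)
    (hlocal : ∀ i, TrianglesThinOn (V i) δ)
    (hdiam : EMetric.diam (V (Fin.last N)) ≤ ENNReal.ofReal Mdiam)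
    (hUopen : ∀ i, IsOpen (U i))
    (hUV : ∀ i : Fin N, V i.castSucc ⊆ U i)
    (hUthin : ∀ i : Fin N, TrianglesThinOn (U i) δ)
    (hmeet : ∀ i : Fin N, ∀ x ∈ V i.castSucc, ∀ y ∉ U i, ∀ γ : ℝ → X,
      IsGeodesic x y γ → (geodImg x y γ ∩ (U i ∩ V (Fin.last N))).Nonempty) :
    TrianglesThinOn (univ : Set X) (3 * δ + 2 * Mdiam) ∧
      ∃ δ' ≥ (0 : ℝ), ∀ o x y z : X,
        gromovProd o x y ≥ min (gromovProd o x z) (gromovProd o z y) - δ' :=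
  stmt_18_general δ Mdiam hδ hM hGeo N V U hcover hdiam hUV hUthin hmeet
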